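/- Let A be a nonnegative tensor of order m and dimension n and suppose x ≥ 0 (nonzero, not necessarily positive) is such that (A x^{m-1})_i > 0 for all i in the support I of a vector y defined by y_I = e_I, y_{I^∁} = 0 where A_I e_I^{m-1} > 0. Then ρ(A) ≥ min_{i ∈ I} (A_I e_I^{m-1})_i > 0. -/

import Mathlib

open Finset

noncomputable section

/-- `(A x^{m-1})_i` for a tensor of order `m'+1` and dimension `n`. -/
def tApply {n m' : ℕ} (A : Fin n → (Fin m' → Fin n) → ℝ) (x : Fin n → ℝ) (i : Fin n) : ℝ :=
  ∑ idx : Fin m' → Fin n, A i idx * ∏ k, x (idx k)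

/-- Complex version of `tApply`. -/
def tApplyC {n m' : ℕ} (A : Fin n → (Fin m' → Fin n) → ℝ) (x : Fin n → ℂ) (i : Fin n) : ℂ :=
  ∑ idx : Fin m' → Fin n, (A i idx : ℂ) * ∏ k, x (idx k)

/-- `lam` is an eigenvalue of the tensor `A`. -/
def IsEig {n m' : ℕ} (A : Fin n → (Fin m' → Fin n) → ℝ) (lam : ℂ) : Prop :=
  ∃ x : Fin n → ℂ, x ≠ 0 ∧ ∀ i, tApplyC A x i = lam * x i ^ m'

/-- The spectral radius of a tensor. -/
def specRad {n m' : ℕ} (A : Fin n → (Fin m' → Fin n) → ℝ) : ℝ :=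
  sSup {r | ∃ lam, IsEig A lam ∧ r = ‖lam‖}

/-- The majorization matrix `M_A` of a tensor `A`. -/
def major {n m' : ℕ} (A : Fin n → (Fin m' → Fin n) → ℝ) (i j : Fin n) : ℝ :=
  ∑ idx ∈ univ.filter (fun idx : Fin m' → Fin n => ∃ k, idx k = j), A i idx

/-- The majorization matrix of the principal sub-tensor `A_I`. -/
def subMajor {n m' : ℕ} (A : Fin n → (Fin m' → Fin n) → ℝ) (I : Finset (Fin n))
    (i j : Fin n) : ℝ :=
  ∑ idx ∈ univ.filter (fun idx : Fin m' → Fin n => (∃ k, idx k = j) ∧ ∀ k, idx k ∈ I),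
    A i idx

/-- Irreducibility of (the principal submatrix on `I` of) a nonnegative matrix. -/
def MatIrredOn {n : ℕ} (M : Fin n → Fin n → ℝ) (I : Finset (Fin n)) : Prop :=
  ∀ S ⊆ I, S.Nonempty → S ≠ I → ∃ i ∈ S, ∃ j ∈ I \ S, M i j ≠ 0

/-- A tensor is weakly irreducible if its majorization matrix is irreducible. -/
def WeaklyIrred {n m' : ℕ} (A : Fin n → (Fin m' → Fin n) → ℝ) : Prop :=
  MatIrredOn (major A) Finset.univ

/-- Weak irreducibility of the principal sub-tensor `A_I`. -/
def WeaklyIrredOn {n m' : ℕ} (A : Fin n → (Fin m' → Fin n) → ℝ) (I : Finset (Fin n)) : Prop :=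
  MatIrredOn (subMajor A I) I

/-- `(A_I e_I^{m-1})_i`, the action of the principal sub-tensor on the all-ones vector. -/
def subApplyOnes {n m' : ℕ} (A : Fin n → (Fin m' → Fin n) → ℝ) (I : Finset (Fin n))
    (i : Fin n) : ℝ :=
  ∑ idx ∈ univ.filter (fun idx : Fin m' → Fin n => ∀ k, idx k ∈ I), A i idx

/-- The spectral radius of the principal sub-tensor `A_I`. -/
def subSpecRad {n m' : ℕ} (A : Fin n → (Fin m' → Fin n) → ℝ) (I : Finset (Fin n)) : ℝ :=
  sSup {r | ∃ lam : ℂ, ∃ x : Fin n → ℂ, (∃ i ∈ I, x i ≠ 0) ∧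
    (∀ i ∈ I, (∑ idx ∈ univ.filter (fun idx : Fin m' → Fin n => ∀ k, idx k ∈ I),
      (A i idx : ℂ) * ∏ k, x (idx k)) = lam * x i ^ m') ∧ r = ‖lam‖}

/-!
For `c = min_{i ∈ I} (A_I e_I^{m-1})_i`, the vector `y` equal to `e_I` on `I` and to `0` elsewhere
satisfies `c y_i^{m-1} ≤ (A y^{m-1})_i` for all `i`, so it is enough to show that such a
sub-eigenpair `(c, x)` with `x ≥ 0, x ≠ 0` forces a real eigenpair `(ρ, z)` with `ρ ≥ c`.
For a positive tensor, maximize `c'` over the compact set of sub-eigenpairs `(c', x)` with `c' ≥ c`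
and `x` in the simplex: if some inequality were strict at the maximum, raising that coordinate of
`x` slightly would, by positivity of `A`, make all of them strict and allow a larger `c'`.
A nonnegative tensor is the limit of the positive tensors `A + 1/(k+1)`, whose eigenpairs are
sub-eigenpairs of `A + 1` and therefore stay in a compact set; a limit point is an eigenpair of `A`.
-/

open Filter Topology

def IsSubEigenpair {n m' : ℕ} (A : Fin n → (Fin m' → Fin n) → ℝ) (r : ℝ) (x : Fin n → ℝ) :
    Prop :=
  ∀ i, r * x i ^ m' ≤ tApply A x i

def rowBound {n m' : ℕ} (A : Fin n → (Fin m' → Fin n) → ℝ) : ℝ :=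
  ⨆ i, ∑ idx : Fin m' → Fin n, A i idx

section

variable {n m' : ℕ} {A B : Fin n → (Fin m' → Fin n) → ℝ} {x y : Fin n → ℝ} {r : ℝ}

lemma tApply_nonneg (hA : ∀ i idx, 0 ≤ A i idx) (hx : 0 ≤ x) (i : Fin n) : 0 ≤ tApply A x i :=
  sum_nonneg fun idx _ => mul_nonneg (hA i idx) (prod_nonneg fun _ _ => hx _)

lemma tApply_mono (hA : ∀ i idx, 0 ≤ A i idx) (hx : 0 ≤ x) (hxy : x ≤ y) (i : Fin n) :
    tApply A x i ≤ tApply A y i :=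
  sum_le_sum fun idx _ =>
    mul_le_mul_of_nonneg_left (prod_le_prod (fun _ _ => hx _) fun _ _ => hxy _) (hA i idx)

lemma tApply_mono_left (hAB : ∀ i idx, A i idx ≤ B i idx) (hx : 0 ≤ x) (i : Fin n) :
    tApply A x i ≤ tApply B x i :=
  sum_le_sum fun idx _ => mul_le_mul_of_nonneg_right (hAB i idx) (prod_nonneg fun _ _ => hx _)

lemma tApply_lt_tApply (hA : ∀ i idx, 0 < A i idx) (hm : m' ≠ 0) (hx : 0 ≤ x) (hxy : x ≤ y)
    (hne : x ≠ y) (i : Fin n) : tApply A x i < tApply A y i := by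
  obtain ⟨j, hj⟩ : ∃ j, x j < y j := by
    by_contra! h
    exact hne (le_antisymm hxy h)
  refine sum_lt_sum (fun idx _ => mul_le_mul_of_nonneg_left
    (prod_le_prod (fun _ _ => hx _) fun _ _ => hxy _) (hA i idx).le) ⟨fun _ => j, mem_univ _, ?_⟩
  refine mul_lt_mul_of_pos_left ?_ (hA i _)
  simpa only [prod_const, card_univ, Fintype.card_fin] using pow_lt_pow_left₀ hj (hx j) hm

lemma tApply_smul (A : Fin n → (Fin m' → Fin n) → ℝ) (t : ℝ) (x : Fin n → ℝ) (i : Fin n) :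
    tApply A (t • x) i = t ^ m' * tApply A x i := by
  simp only [tApply, mul_sum, Pi.smul_apply, smul_eq_mul, prod_mul_distrib, prod_const, card_univ,
    Fintype.card_fin]
  exact sum_congr rfl fun _ _ => by ring

lemma tApply_indicator (A : Fin n → (Fin m' → Fin n) → ℝ) (I : Finset (Fin n)) (i : Fin n) :
    tApply A (fun p => if p ∈ I then (1 : ℝ) else 0) i = subApplyOnes A I i := by
  simp only [tApply, subApplyOnes, sum_filter, prod_boole, mem_univ, true_imp_iff, mul_ite,
    mul_one, mul_zero]

lemma continuous_tApply (i : Fin n) :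
    Continuous fun p : (Fin n → (Fin m' → Fin n) → ℝ) × (Fin n → ℝ) => tApply p.1 p.2 i := by
  unfold tApply
  fun_prop

lemma tApply_le_rowSum_mul (hA : ∀ i idx, 0 ≤ A i idx) (hx : 0 ≤ x) {s : ℝ} (hs : ∀ j, x j ≤ s)
    (i : Fin n) : tApply A x i ≤ (∑ idx, A i idx) * s ^ m' := by
  rw [sum_mul]
  refine sum_le_sum fun idx _ => mul_le_mul_of_nonneg_left ?_ (hA i idx)
  simpa only [prod_const, card_univ, Fintype.card_fin] using
    prod_le_prod (s := univ) (fun k _ => hx (idx k)) fun k _ => hs (idx k)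

lemma norm_tApplyC_le (hA : ∀ i idx, 0 ≤ A i idx) (x : Fin n → ℂ) (i : Fin n) :
    ‖tApplyC A x i‖ ≤ tApply A (fun j => ‖x j‖) i := by
  refine (norm_sum_le _ _).trans (le_of_eq (sum_congr rfl fun idx _ => ?_))
  rw [norm_mul, norm_prod, Complex.norm_real, Real.norm_of_nonneg (hA i idx)]

lemma tApplyC_ofReal (A : Fin n → (Fin m' → Fin n) → ℝ) (x : Fin n → ℝ) (i : Fin n) :
    tApplyC A (fun j => (x j : ℂ)) i = tApply A x i := by
  simp [tApplyC, tApply]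

lemma IsSubEigenpair.of_eq (h : ∀ i, tApply A x i = r * x i ^ m') : IsSubEigenpair A r x :=
  fun i => (h i).ge

lemma IsSubEigenpair.smul (h : IsSubEigenpair A r x) {t : ℝ} (ht : 0 ≤ t) :
    IsSubEigenpair A r (t • x) :=
  fun i => by
    rw [tApply_smul, Pi.smul_apply, smul_eq_mul, mul_pow, mul_left_comm]
    exact mul_le_mul_of_nonneg_left (h i) (pow_nonneg ht m')

lemma IsSubEigenpair.mono_left (h : IsSubEigenpair A r x) (hAB : ∀ i idx, A i idx ≤ B i idx)
    (hx : 0 ≤ x) : IsSubEigenpair B r x :=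
  fun i => (h i).trans (tApply_mono_left hAB hx i)

lemma IsSubEigenpair.le_rowBound (h : IsSubEigenpair A r x) (hA : ∀ i idx, 0 ≤ A i idx)
    (hx : 0 ≤ x) (hx0 : x ≠ 0) : r ≤ rowBound A := by
  have : Nonempty (Fin n) := by
    by_contra h
    exact hx0 (funext fun i => (not_nonempty_iff.1 h).elim i)
  obtain ⟨j, hj⟩ := Finite.exists_max x
  have hxj : 0 < x j := by
    by_contra! hle
    exact hx0 (funext fun i => le_antisymm ((hj i).trans hle) (hx i))
  have hrow : r * x j ^ m' ≤ (∑ idx, A j idx) * x j ^ m' :=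
    (h j).trans (tApply_le_rowSum_mul hA hx hj j)
  exact (le_of_mul_le_mul_right hrow (pow_pos hxj m')).trans
    (le_ciSup (f := fun i => ∑ idx, A i idx) (Set.finite_range _).bddAbove j)

lemma IsSubEigenpair.exists_mem_stdSimplex (h : IsSubEigenpair A r x) (hx : 0 ≤ x)
    (hx0 : x ≠ 0) : ∃ y ∈ stdSimplex ℝ (Fin n), IsSubEigenpair A r y := by
  have hsum : 0 < ∑ i, x i := by
    obtain ⟨i, hi⟩ := Function.ne_iff.1 hx0
    exact (lt_of_le_of_ne (hx i) (Ne.symm hi)).trans_le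
      (single_le_sum (fun j _ => hx j) (mem_univ i))
  refine ⟨(∑ i, x i)⁻¹ • x, ⟨fun i => mul_nonneg (inv_nonneg.2 hsum.le) (hx i), ?_⟩,
    h.smul (inv_nonneg.2 hsum.le)⟩
  simp only [Pi.smul_apply, smul_eq_mul, ← mul_sum, inv_mul_cancel₀ hsum.ne']

lemma isEig_ofReal (hx : x ≠ 0) (h : ∀ i, tApply A x i = r * x i ^ m') : IsEig A r :=
  ⟨fun j => (x j : ℂ), fun h0 => hx (funext fun j => by simpa using congrFun h0 j),
    fun i => by rw [tApplyC_ofReal, h i]; push_cast; rfl⟩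

lemma IsEig.norm_le_rowBound (hA : ∀ i idx, 0 ≤ A i idx) {lam : ℂ} (h : IsEig A lam) :
    ‖lam‖ ≤ rowBound A := by
  obtain ⟨x, hx0, hx⟩ := h
  refine IsSubEigenpair.le_rowBound (x := fun j => ‖x j‖) (fun i => ?_) hA
    (fun j => norm_nonneg _) (fun h0 => hx0 (funext fun j => norm_eq_zero.1 (congrFun h0 j)))
  simpa only [hx i, norm_mul, norm_pow] using norm_tApplyC_le hA x i

lemma IsEig.norm_le_specRad (hA : ∀ i idx, 0 ≤ A i idx) {lam : ℂ} (h : IsEig A lam) :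
    ‖lam‖ ≤ specRad A :=
  le_csSup ⟨rowBound A, by rintro _ ⟨l, hl, rfl⟩; exact hl.norm_le_rowBound hA⟩ ⟨lam, h, rfl⟩

lemma ne_zero_of_mem_stdSimplex (hx : x ∈ stdSimplex ℝ (Fin n)) : x ≠ 0 := fun h0 => by
  simpa [h0] using hx.2

lemma exists_gt_isSubEigenpair_of_forall_lt (h : ∀ i, r * x i ^ m' < tApply A x i) :
    ∃ r' > r, IsSubEigenpair A r' x := by
  have hev : ∀ᶠ r' in 𝓝[>] r, ∀ i, r' * x i ^ m' < tApply A x i :=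
    eventually_nhdsWithin_of_eventually_nhds <| eventually_all.2 fun i =>
      (continuous_mul_const _).continuousAt.eventually_lt continuousAt_const (h i)
  obtain ⟨r', hr', hr⟩ := (hev.and self_mem_nhdsWithin).exists
  exact ⟨r', hr, fun i => (hr' i).le⟩

lemma IsSubEigenpair.exists_forall_lt (h : IsSubEigenpair A r x) (hA : ∀ i idx, 0 < A i idx)
    (hm : m' ≠ 0) (hx : 0 ≤ x) {i : Fin n} (hi : r * x i ^ m' < tApply A x i) :
    ∃ y, 0 ≤ y ∧ y ≠ 0 ∧ ∀ j, r * y j ^ m' < tApply A y j := by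
  have hev : ∀ᶠ δ in 𝓝[>] (0 : ℝ), r * (x i + δ) ^ m' < tApply A x i :=
    eventually_nhdsWithin_of_eventually_nhds <|
      (by fun_prop : Continuous fun δ : ℝ => r * (x i + δ) ^ m').continuousAt.eventually_lt
        continuousAt_const (by simpa using hi)
  obtain ⟨δ, hδ, hδpos : 0 < δ⟩ := (hev.and self_mem_nhdsWithin).exists
  set y := Function.update x i (x i + δ)
  have hxy : x ≤ y := le_update_self_iff.2 (le_add_of_nonneg_right hδpos.le)
  have hne : x ≠ y := fun e => by simpa [y, hδpos.ne'] using congrFun e i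
  refine ⟨y, hx.trans hxy, fun hy => hne ((le_antisymm (hxy.trans hy.le) hx).trans hy.symm),
    fun j => ?_⟩
  by_cases hj : j = i
  · subst hj
    simpa only [y, Function.update_self] using
      hδ.trans_le (tApply_mono (fun i idx => (hA i idx).le) hx hxy j)
  · rw [show y j = x j from Function.update_of_ne hj _ _]
    exact (h j).trans_lt (tApply_lt_tApply hA hm hx hxy hne j)

lemma exists_eigenpair_ge_of_pos (hA : ∀ i idx, 0 < A i idx) (hm : m' ≠ 0)
    (hx : x ∈ stdSimplex ℝ (Fin n)) (h : IsSubEigenpair A r x) :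
    ∃ ρ ≥ r, ∃ z ∈ stdSimplex ℝ (Fin n), ∀ i, tApply A z i = ρ * z i ^ m' := by
  have hA' : ∀ i idx, 0 ≤ A i idx := fun i idx => (hA i idx).le
  set K := {p : (Fin n → ℝ) × ℝ | p.1 ∈ stdSimplex ℝ (Fin n) ∧ r ≤ p.2 ∧ IsSubEigenpair A p.2 p.1}
  have hK : IsCompact K := by
    refine ((isCompact_stdSimplex ℝ _).prod (isCompact_Icc (a := r) (b := rowBound A)))
      |>.of_isClosed_subset ?_ ?_
    · refine ((isClosed_stdSimplex ℝ _).preimage continuous_fst).inter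
        ((isClosed_le continuous_const continuous_snd).inter ?_)
      show IsClosed {p : (Fin n → ℝ) × ℝ | ∀ i, p.2 * p.1 i ^ m' ≤ tApply A p.1 i}
      rw [Set.ofPred_forall]
      exact isClosed_iInter fun i => isClosed_le (by fun_prop)
        ((continuous_tApply i).comp (continuous_const.prodMk continuous_fst))
    · rintro ⟨z, ρ⟩ ⟨hz, hρ, hsub⟩
      exact ⟨hz, hρ, hsub.le_rowBound hA' hz.1 (ne_zero_of_mem_stdSimplex hz)⟩
  obtain ⟨⟨z, ρ⟩, ⟨hz, hρ, hsub⟩, hmax⟩ :=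
    hK.exists_isMaxOn ⟨(x, r), hx, le_rfl, h⟩ continuous_snd.continuousOn
  refine ⟨ρ, hρ, z, hz, fun i => by_contra fun hne => ?_⟩
  obtain ⟨y, hy0, hyne, hlt⟩ :=
    hsub.exists_forall_lt hA hm hz.1 (lt_of_le_of_ne (hsub i) (Ne.symm hne))
  obtain ⟨ρ', hρ', hy⟩ := exists_gt_isSubEigenpair_of_forall_lt hlt
  obtain ⟨w, hw, hwsub⟩ := hy.exists_mem_stdSimplex hy0 hyne
  exact (isMaxOn_iff.1 hmax (w, ρ') ⟨hw, hρ.trans hρ'.le, hwsub⟩).not_gt hρ'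

lemma exists_eigenpair_ge (hA : ∀ i idx, 0 ≤ A i idx) (hm : m' ≠ 0)
    (hx : x ∈ stdSimplex ℝ (Fin n)) (h : IsSubEigenpair A r x) :
    ∃ ρ ≥ r, ∃ z ∈ stdSimplex ℝ (Fin n), ∀ i, tApply A z i = ρ * z i ^ m' := by
  set Aseq : ℕ → Fin n → (Fin m' → Fin n) → ℝ := fun k i idx => A i idx + 1 / (k + 1)
  have hAB : ∀ k i idx, A i idx ≤ Aseq k i idx := fun k i idx =>
    le_add_of_nonneg_right (by positivity)
  have hAseq_le : ∀ k i idx, Aseq k i idx ≤ A i idx + 1 := fun k i idx =>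
    add_le_add le_rfl <|
      div_le_one_of_le₀ (le_add_of_nonneg_left k.cast_nonneg) (by positivity : (0 : ℝ) ≤ k + 1)
  have hAseq : Tendsto Aseq atTop (𝓝 A) :=
    tendsto_pi_nhds.2 fun i => tendsto_pi_nhds.2 fun idx => by
      simpa [Aseq] using (tendsto_one_div_add_atTop_nhds_zero_nat (𝕜 := ℝ)).const_add (A i idx)
  choose ρ hρ z hz heig using fun k => exists_eigenpair_ge_of_pos
    (fun i idx => (hA i idx).trans_lt (lt_add_of_pos_right _ (by positivity))) hm hx
    (h.mono_left (hAB k) hx.1)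
  have hρ_le : ∀ k, ρ k ≤ rowBound fun i idx => A i idx + 1 := fun k =>
    ((IsSubEigenpair.of_eq (heig k)).mono_left (hAseq_le k) (hz k).1).le_rowBound
      (fun i idx => by linarith [hA i idx]) (hz k).1 (ne_zero_of_mem_stdSimplex (hz k))
  obtain ⟨⟨z₀, ρ₀⟩, ⟨hz₀, hρ₀, -⟩, φ, hφ, hlim⟩ :=
    ((isCompact_stdSimplex ℝ (Fin n)).prod isCompact_Icc).tendsto_subseq
      (x := fun k => (z k, ρ k)) fun k => ⟨hz k, hρ k, hρ_le k⟩
  have hAφ : Tendsto (fun k => Aseq (φ k)) atTop (𝓝 A) := hAseq.comp hφ.tendsto_atTop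
  have hzφ : Tendsto (fun k => z (φ k)) atTop (𝓝 z₀) := hlim.fst_nhds
  have hρφ : Tendsto (fun k => ρ (φ k)) atTop (𝓝 ρ₀) := hlim.snd_nhds
  refine ⟨ρ₀, hρ₀, z₀, hz₀, fun i => tendsto_nhds_unique
    (((continuous_tApply i).tendsto (A, z₀)).comp (hAφ.prodMk_nhds hzφ)) ?_⟩
  simp only [Function.comp_def, Aseq, heig]
  exact hρφ.mul ((tendsto_pi_nhds.1 hzφ i).pow m')

lemma le_specRad_of_isSubEigenpair (hA : ∀ i idx, 0 ≤ A i idx) (hm : m' ≠ 0) (hx : 0 ≤ x)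
    (hx0 : x ≠ 0) (h : IsSubEigenpair A r x) : r ≤ specRad A := by
  obtain ⟨y, hy, hsub⟩ := h.exists_mem_stdSimplex hx hx0
  obtain ⟨ρ, hρ, z, hz, heig⟩ := exists_eigenpair_ge hA hm hy hsub
  calc r ≤ ρ := hρ
    _ ≤ ‖(ρ : ℂ)‖ := by rw [Complex.norm_real]; exact Real.le_norm_self ρ
    _ ≤ specRad A := (isEig_ofReal (ne_zero_of_mem_stdSimplex hz) heig).norm_le_specRad hA

end

theorem collatz_wielandt_lower_bound_general {n m' : ℕ} (hm : 1 ≤ m')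
    (A : Fin n → (Fin m' → Fin n) → ℝ)
    (hA : ∀ i idx, 0 ≤ A i idx)
    (I : Finset (Fin n)) (hI : I.Nonempty)
    (hsub : ∀ i ∈ I, 0 < subApplyOnes A I i) :
    I.inf' hI (subApplyOnes A I) ≤ specRad A ∧
      0 < I.inf' hI (subApplyOnes A I) := by
  set y : Fin n → ℝ := fun p => if p ∈ I then 1 else 0
  have hy : 0 ≤ y := fun p => by by_cases hp : p ∈ I <;> simp [y, hp]
  have hy0 : y ≠ 0 := fun h => by
    obtain ⟨i, hi⟩ := hI
    simpa [y, hi] using congrFun h i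
  have hsubeig : IsSubEigenpair A (I.inf' hI (subApplyOnes A I)) y := fun i => by
    by_cases hi : i ∈ I
    · simp only [y, hi, if_true, one_pow, mul_one, tApply_indicator]
      exact inf'_le _ hi
    · simpa [y, hi, zero_pow (Nat.one_le_iff_ne_zero.1 hm)] using tApply_nonneg hA hy i
  exact ⟨le_specRad_of_isSubEigenpair hA (Nat.one_le_iff_ne_zero.1 hm) hy hy0 hsubeig,
    (lt_inf'_iff hI).2 hsub⟩

/-- Collatz–Wielandt lower bound via a strictly nonnegative principal
sub-tensor. -/
theorem collatz_wielandt_lower_bound {n m' : ℕ} (hm : 1 ≤ m') (hn : 1 ≤ n)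
    (A : Fin n → (Fin m' → Fin n) → ℝ)
    (hA : ∀ i idx, 0 ≤ A i idx)
    (I : Finset (Fin n)) (hI : I.Nonempty)
    (hsub : ∀ i ∈ I, 0 < subApplyOnes A I i)
    (hy : ∀ i ∈ I, 0 < tApply A (fun p => if p ∈ I then (1 : ℝ) else 0) i) :
    I.inf' hI (subApplyOnes A I) ≤ specRad A ∧
      0 < I.inf' hI (subApplyOnes A I) :=
  collatz_wielandt_lower_bound_general hm A hA I hI hsub

end
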